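/- Let M ∈ ℝ^{n×n} be Hurwitz with M ≠ 0, let ε > 0, let D ∈ ℝ^{n×n} be symmetric with D ⪰ ε·I, and let W be the solution of the Lyapunov equation MᵀW + WM + D = 0. Then W ⪰ (ε / (2‖M‖))·I; in particular λmin(W) ≥ ε / (2‖M‖). -/

import Mathlib

open Matrix MeasureTheory

/-- Spectral (ℓ² operator) norm of a real matrix. -/
noncomputable def specNorm {p q : Type*} [Fintype p] [Fintype q] [DecidableEq q]
    (M : Matrix p q ℝ) : ℝ :=
  ‖LinearMap.toContinuousLinearMap (Matrix.toEuclideanLin M)‖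

/-- A real square matrix is Hurwitz if all of its eigenvalues over ℂ have negative real part. -/
def IsHurwitz {k : Type*} [Fintype k] [DecidableEq k] (M : Matrix k k ℝ) : Prop :=
  ∀ μ ∈ spectrum ℂ (M.map (Complex.ofReal ·)), μ.re < 0

/-- Smallest (real) eigenvalue of a real matrix. -/
noncomputable def lamMin {k : Type*} [Fintype k] [DecidableEq k] (X : Matrix k k ℝ) : ℝ :=
  sInf (spectrum ℝ X)

/-- Largest (real) eigenvalue of a real matrix. -/
noncomputable def lamMax {k : Type*} [Fintype k] [DecidableEq k] (X : Matrix k k ℝ) : ℝ :=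
  sSup (spectrum ℝ X)

/-! The solution `W` is positive definite. Along the path `Aₜ = (1 - t) • M - t • 1` of Hurwitz
matrices the Lyapunov operator `X ↦ Aₜᵀ X + X Aₜ` is invertible (`Aₜᵀ` and `-Aₜ` have disjoint
spectra), so the solutions `Wₜ` vary continuously; they stay symmetric and invertible
(`Wₜ x = 0` would force `xᵀ D x = 0`), and `W₁ = D / 2` is positive definite. Among invertible
symmetric matrices positive definiteness is both an open and a closed condition, so `W₀ = W` is
positive definite too. If now `W v = μ v` with `v ≠ 0`, then
`ε |v|² ≤ vᵀ D v = -2 μ vᵀ M v ≤ 2 μ ‖M‖ |v|²`, and `μ > 0` gives `μ ≥ ε / (2 ‖M‖)`. -/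

open Polynomial

theorem Polynomial.aeval_mul_eq_mul_aeval {R A : Type*} [CommSemiring R] [Semiring A]
    [Algebra R A] {b c y : A} (h : b * y = y * c) (p : R[X]) :
    aeval b p * y = y * aeval c p := by
  induction p using Polynomial.induction_on' with
  | add p q hp hq => rw [map_add, map_add, add_mul, mul_add, hp, hq]
  | monomial k r =>
    rw [aeval_monomial, aeval_monomial, mul_assoc, ← (SemiconjBy.pow_right h.symm k).eq,
      ← mul_assoc, Algebra.commutes, mul_assoc]

theorem Continuous.ringInverse_apply {𝕜 X E : Type*} [NontriviallyNormedField 𝕜]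
    [TopologicalSpace X] [NormedAddCommGroup E] [NormedSpace 𝕜 E] [CompleteSpace E]
    {L : X → E →L[𝕜] E} (hL : Continuous L) (hu : ∀ t, IsUnit (L t)) (y : E) :
    Continuous fun t => Ring.inverse (L t) y := by
  refine continuous_iff_continuousAt.mpr fun t => ?_
  obtain ⟨u, hu⟩ := hu t
  have hinv : ContinuousAt Ring.inverse (L t) := hu ▸ NormedRing.inverse_continuousAt u
  exact (ContinuousLinearMap.apply 𝕜 E y).continuous.continuousAt.comp
    (hinv.comp hL.continuousAt)

namespace Matrix

variable {ι : Type*} [Fintype ι]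

theorem spectrum_transpose [DecidableEq ι] {R : Type*} [CommRing R] (B : Matrix ι ι R) :
    spectrum R Bᵀ = spectrum R B := by
  ext r
  simp only [mem_spectrum_iff_not_isUnit_eval_charpoly, charpoly_transpose]

theorem eq_zero_of_mul_eq_mul_of_disjoint_spectrum [DecidableEq ι] {K : Type*} [Field K]
    [IsAlgClosed K] {B C Y : Matrix ι ι K} (hBC : Disjoint (spectrum K B) (spectrum K C))
    (h : B * Y = Y * C) : Y = 0 := by
  cases isEmpty_or_nonempty ι
  · exact Subsingleton.elim _ _
  have hdeg : 0 < C.charpoly.degree := by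
    rw [charpoly_degree_eq_dim]; exact_mod_cast Fintype.card_pos
  -- Cayley–Hamilton kills `χ_C(C)`, while `χ_C(B)` is invertible by spectral mapping.
  have hunit : IsUnit (aeval B C.charpoly) := by
    rw [← spectrum.zero_notMem_iff K, spectrum.map_polynomial_aeval_of_degree_pos B _ hdeg]
    rintro ⟨μ, hμB, hμC⟩
    exact hBC.notMem_of_mem_left hμB (mem_spectrum_iff_isRoot_charpoly.mpr hμC)
  rw [← hunit.mul_right_eq_zero, aeval_mul_eq_mul_aeval h, aeval_self_charpoly, mul_zero]

variable (R : Type*) [CommRing R] in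
def lyapunovMap : Matrix ι ι R →ₗ[R] Matrix ι ι R →ₗ[R] Matrix ι ι R :=
  LinearMap.mk₂ R (fun A X => Aᵀ * X + X * A)
    (fun A B X => by rw [transpose_add]; noncomm_ring)
    (fun c A X => by rw [transpose_smul, smul_mul_assoc, mul_smul_comm, smul_add])
    (fun A X Y => by noncomm_ring)
    (fun c A X => by rw [mul_smul_comm, smul_mul_assoc, smul_add])

@[simp]
theorem lyapunovMap_apply {R : Type*} [CommRing R] (A X : Matrix ι ι R) :
    lyapunovMap R A X = Aᵀ * X + X * A :=
  rfl

theorem IsHermitian.dotProduct_lyapunov_mulVec {W : Matrix ι ι ℝ} (hW : W.IsHermitian)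
    (A : Matrix ι ι ℝ) (v : ι → ℝ) :
    v ⬝ᵥ ((Aᵀ * W + W * A) *ᵥ v) = 2 * ((W *ᵥ v) ⬝ᵥ (A *ᵥ v)) := by
  have hWt : Wᵀ = W := isHermitian_iff_isSymm.mp hW
  rw [add_mulVec, dotProduct_add, ← mulVec_mulVec, ← mulVec_mulVec, dotProduct_mulVec v Aᵀ,
    dotProduct_mulVec v W, vecMul_transpose, ← hWt, vecMul_transpose, hWt, dotProduct_comm]
  ring

theorem isUnit_of_lyapunov [DecidableEq ι] {A D W : Matrix ι ι ℝ} (hWherm : W.IsHermitian)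
    (hD : D.PosDef) (hW : Aᵀ * W + W * A + D = 0) : IsUnit W := by
  rw [isUnit_iff_isUnit_det, isUnit_iff_ne_zero]
  intro hdet
  obtain ⟨v, hv, hWv⟩ := exists_mulVec_eq_zero_iff.mpr hdet
  have hDv : v ⬝ᵥ (D *ᵥ v) = 0 := by
    rw [eq_neg_of_add_eq_zero_right hW, neg_mulVec, dotProduct_neg,
      hWherm.dotProduct_lyapunov_mulVec, hWv, zero_dotProduct, mul_zero, neg_zero]
  exact (hD.dotProduct_mulVec_pos hv).ne' (by simpa using hDv)

theorem isClosed_setOf_exists_mem_sphere_dotProduct_mulVec_nonpos :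
    IsClosed {A : Matrix ι ι ℝ | ∃ x ∈ Metric.sphere (0 : ι → ℝ) 1, x ⬝ᵥ (A *ᵥ x) ≤ 0} := by
  have : CompactSpace (Metric.sphere (0 : ι → ℝ) 1) :=
    isCompact_iff_compactSpace.mp (isCompact_sphere 0 1)
  have hS : IsClosed {p : Matrix ι ι ℝ × Metric.sphere (0 : ι → ℝ) 1 |
      (p.2 : ι → ℝ) ⬝ᵥ (p.1 *ᵥ p.2) ≤ 0} :=
    isClosed_le (by fun_prop) continuous_const
  convert isClosedMap_fst_of_compactSpace _ hS using 1
  ext A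
  simp

theorem isClosed_setOf_forall_dotProduct_mulVec_nonneg :
    IsClosed {A : Matrix ι ι ℝ | ∀ x : ι → ℝ, 0 ≤ x ⬝ᵥ (A *ᵥ x)} := by
  simp only [Set.ofPred_forall]
  exact isClosed_iInter fun x => isClosed_le continuous_const (by fun_prop)

theorem posSemidef_of_forall_mem_sphere_pos {A : Matrix ι ι ℝ} (hA : A.IsHermitian)
    (h : ∀ x ∈ Metric.sphere (0 : ι → ℝ) 1, 0 < x ⬝ᵥ (A *ᵥ x)) : A.PosSemidef := by
  refine PosSemidef.of_dotProduct_mulVec_nonneg hA fun x => ?_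
  rcases eq_or_ne x 0 with rfl | hx
  · simp
  have hx' : 0 < ‖x‖ := norm_pos_iff.mpr hx
  have hscale : x ⬝ᵥ (A *ᵥ x) = ‖x‖ ^ 2 * ((‖x‖⁻¹ • x) ⬝ᵥ (A *ᵥ (‖x‖⁻¹ • x))) := by
    rw [mulVec_smul, dotProduct_smul, smul_dotProduct, smul_eq_mul, smul_eq_mul]
    field_simp
  rw [star_trivial, hscale]
  exact (mul_pos (by positivity) (h _ (by simp [norm_smul, hx'.ne']))).le

theorem posDef_of_continuous_of_isUnit [DecidableEq ι] {X : Type*} [TopologicalSpace X]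
    [PreconnectedSpace X] {f : X → Matrix ι ι ℝ} (hf : Continuous f)
    (hherm : ∀ t, (f t).IsHermitian) (hunit : ∀ t, IsUnit (f t)) {a b : X}
    (hb : (f b).PosDef) : (f a).PosDef := by
  have hclosed : {t | (f t).PosDef} = f ⁻¹' {A | ∀ x : ι → ℝ, 0 ≤ x ⬝ᵥ (A *ᵥ x)} := by
    refine Set.ext fun t => ⟨fun h x => by simpa using h.posSemidef.dotProduct_mulVec_nonneg x,
      fun h => ?_⟩
    have hpsd := PosSemidef.of_dotProduct_mulVec_nonneg (hherm t) (by simpa using h)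
    exact hpsd.posDef_iff_isUnit.mpr (hunit t)
  have hopen : {t | (f t).PosDef} =
      f ⁻¹' {A | ∃ x ∈ Metric.sphere (0 : ι → ℝ) 1, x ⬝ᵥ (A *ᵥ x) ≤ 0}ᶜ := by
    refine Set.ext fun t => ⟨fun h ⟨x, hx, hle⟩ => ?_, fun h => ?_⟩
    · have hx0 : x ≠ 0 := by rintro rfl; simp at hx
      exact (h.dotProduct_mulVec_pos hx0).not_ge (by simpa using hle)
    · refine (posSemidef_of_forall_mem_sphere_pos (hherm t) fun x hx => ?_).posDef_iff_isUnit.mpr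
        (hunit t)
      exact not_le.mp fun hle => h ⟨x, hx, hle⟩
  have hclopen : IsClopen {t | (f t).PosDef} :=
    ⟨hclosed ▸ isClosed_setOf_forall_dotProduct_mulVec_nonneg.preimage hf,
      hopen ▸ isClosed_setOf_exists_mem_sphere_dotProduct_mulVec_nonpos.isOpen_compl.preimage hf⟩
  exact Set.eq_univ_iff_forall.mp (hclopen.eq_univ ⟨b, hb⟩) a

theorem IsHermitian.posSemidef_sub_smul_one [DecidableEq ι] {A : Matrix ι ι ℝ}
    (hA : A.IsHermitian) {c : ℝ} (h : ∀ μ ∈ spectrum ℝ A, c ≤ μ) : (A - c • 1).PosSemidef := by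
  refine posSemidef_iff_isHermitian_and_spectrum_nonneg.mpr
    ⟨hA.sub (isHermitian_one.smul (IsSelfAdjoint.all c)), ?_⟩
  rw [← Algebra.algebraMap_eq_smul_one, ← spectrum.sub_singleton_eq]
  rintro _ ⟨μ, hμ, _, rfl, rfl⟩
  exact sub_nonneg.mpr (h μ hμ)

end Matrix

section

open Matrix

variable {ι : Type*} [Fintype ι] [DecidableEq ι]

open scoped Matrix.Norms.L2Operator in
theorem abs_dotProduct_mulVec_le_specNorm (A : Matrix ι ι ℝ) (v : ι → ℝ) :
    |v ⬝ᵥ (A *ᵥ v)| ≤ specNorm A * (v ⬝ᵥ v) := by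
  set x : EuclideanSpace ℝ ι := WithLp.toLp 2 v
  have hinner (w : ι → ℝ) : inner ℝ x (WithLp.toLp 2 w) = v ⬝ᵥ w := by
    rw [EuclideanSpace.inner_toLp_toLp, star_trivial, dotProduct_comm]
  have hA : ‖WithLp.toLp 2 (A *ᵥ v)‖ ≤ specNorm A * ‖x‖ := l2_opNorm_mulVec A x
  calc |v ⬝ᵥ (A *ᵥ v)| = |inner ℝ x (WithLp.toLp 2 (A *ᵥ v))| := by rw [hinner]
    _ ≤ ‖x‖ * ‖WithLp.toLp 2 (A *ᵥ v)‖ := abs_real_inner_le_norm _ _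
    _ ≤ ‖x‖ * (specNorm A * ‖x‖) := by gcongr
    _ = specNorm A * (v ⬝ᵥ v) := by rw [← hinner v, real_inner_self_eq_norm_sq]; ring

namespace IsHurwitz

variable {A D W : Matrix ι ι ℝ}

theorem lyapunovMap_injective (hA : IsHurwitz A) : Function.Injective (lyapunovMap ℝ A) := by
  rw [injective_iff_map_eq_zero]
  intro X hX
  set f := Complex.ofRealHom.mapMatrix (m := ι)
  have hdisj : Disjoint (spectrum ℂ (f A)ᵀ) (spectrum ℂ (-f A)) := by
    rw [spectrum_transpose, ← spectrum.neg_eq, Set.disjoint_left]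
    intro μ hμ hμneg
    have h1 := hA μ hμ
    have h2 := hA (-μ) (Set.mem_neg.mp hμneg)
    rw [Complex.neg_re] at h2
    linarith
  have hY : (f A)ᵀ * f X = f X * -f A := by
    have := congrArg f hX
    rw [lyapunovMap_apply, map_add, map_mul, map_mul, map_zero] at this
    rw [mul_neg, ← add_eq_zero_iff_eq_neg, ← this]
    simp [f, transpose_map]
  exact (Matrix.map_injective Complex.ofReal_injective) <|
    (eq_zero_of_mul_eq_mul_of_disjoint_spectrum hdisj hY).trans (map_zero f).symm

theorem eq_of_lyapunov (hA : IsHurwitz A) {X Y : Matrix ι ι ℝ} (hX : Aᵀ * X + X * A + D = 0)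
    (hY : Aᵀ * Y + Y * A + D = 0) : X = Y :=
  hA.lyapunovMap_injective <| by
    rw [lyapunovMap_apply, lyapunovMap_apply, eq_neg_of_add_eq_zero_left hX,
      eq_neg_of_add_eq_zero_left hY]

theorem isHermitian_of_lyapunov (hA : IsHurwitz A) (hD : D.IsHermitian)
    (hW : Aᵀ * W + W * A + D = 0) : W.IsHermitian := by
  rw [isHermitian_iff_isSymm] at hD ⊢
  refine hA.eq_of_lyapunov ?_ hW
  have := congrArg transpose hW
  rwa [transpose_add, transpose_add, transpose_mul, transpose_mul, transpose_transpose, hD,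
    add_comm (Wᵀ * A), transpose_zero] at this

theorem one_sub_smul_sub_smul_one (hA : IsHurwitz A) {t : ℝ} (ht₀ : 0 ≤ t) (ht₁ : t ≤ 1) :
    IsHurwitz ((1 - t) • A - t • 1) := by
  intro μ hμ
  cases isEmpty_or_nonempty ι
  · simp [spectrum.of_subsingleton] at hμ
  set B := A.map (Complex.ofReal ·)
  have hmap : ((1 - t) • A - t • 1).map (Complex.ofReal ·) =
      aeval B (Polynomial.C ((1 - t : ℝ) : ℂ) * X - Polynomial.C (t : ℂ)) := by
    rw [map_sub, map_mul, aeval_C, aeval_X, aeval_C, ← Algebra.smul_def,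
      Algebra.algebraMap_eq_smul_one]
    ext i j
    by_cases hij : i = j <;> simp [B, hij]
  rw [hmap, spectrum.map_polynomial_aeval_of_nonempty _ _
    (spectrum.nonempty_of_isAlgClosed_of_finiteDimensional ℂ B)] at hμ
  obtain ⟨ν, hν, rfl⟩ := hμ
  have hν' : ν.re < 0 := hA ν hν
  simp only [eval_sub, eval_mul, eval_C, eval_X, Complex.sub_re, Complex.mul_re,
    Complex.ofReal_re, Complex.ofReal_im, zero_mul, sub_zero]
  rcases ht₀.eq_or_lt with rfl | ht₀
  · simpa using hν'
  · nlinarith [mul_nonpos_of_nonneg_of_nonpos (sub_nonneg.mpr ht₁) hν'.le]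

section

attribute [local instance] Matrix.normedAddCommGroup Matrix.normedSpace

theorem exists_continuous_lyapunov_solution {X : Type*} [TopologicalSpace X]
    {A : X → Matrix ι ι ℝ} (hA : Continuous A) (hHur : ∀ t, IsHurwitz (A t))
    (D : Matrix ι ι ℝ) :
    ∃ W : X → Matrix ι ι ℝ, Continuous W ∧ ∀ t, (A t)ᵀ * W t + W t * A t + D = 0 := by
  set L := fun t => LinearMap.toContinuousLinearMap (lyapunovMap ℝ (A t))
  have hL : Continuous L :=
    (LinearMap.continuous_of_finiteDimensional
      ((LinearMap.toContinuousLinearMap : (Matrix ι ι ℝ →ₗ[ℝ] Matrix ι ι ℝ) ≃ₗ[ℝ] _).toLinearMap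
        ∘ₗ lyapunovMap ℝ)).comp hA
  have hu (t : X) : IsUnit (L t) :=
    have hinj := (hHur t).lyapunovMap_injective
    ⟨(LinearEquiv.ofBijective _ ⟨hinj, LinearMap.surjective_of_injective hinj⟩)
      |>.toContinuousLinearEquiv.toUnit, rfl⟩
  refine ⟨fun t => Ring.inverse (L t) (-D), hL.ringInverse_apply hu _, fun t => ?_⟩
  have := congrArg (· (-D)) (Ring.mul_inverse_cancel _ (hu t))
  rw [← lyapunovMap_apply, add_eq_zero_iff_eq_neg]
  exact this

end

theorem posDef_of_lyapunov (hA : IsHurwitz A) (hD : D.PosDef)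
    (hW : Aᵀ * W + W * A + D = 0) : W.PosDef := by
  set P : unitInterval → Matrix ι ι ℝ := fun t => (1 - (t : ℝ)) • A - (t : ℝ) • 1
  have hP (t : unitInterval) : IsHurwitz (P t) := hA.one_sub_smul_sub_smul_one t.2.1 t.2.2
  obtain ⟨V, hVc, hV⟩ := exists_continuous_lyapunov_solution (A := P) (by fun_prop) hP D
  have hVherm (t : unitInterval) : (V t).IsHermitian :=
    (hP t).isHermitian_of_lyapunov hD.isHermitian (hV t)
  have hV0 : V 0 = W := hA.eq_of_lyapunov (by simpa [P] using hV 0) hW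
  have hV1 : V 1 = (1 / 2 : ℝ) • D := by
    have h := hV 1
    simp only [P, Set.Icc.coe_one, sub_self, zero_smul, one_smul, zero_sub, transpose_neg,
      transpose_one, neg_mul, one_mul, mul_neg, mul_one] at h
    linear_combination (norm := module) (-(1 / 2 : ℝ)) • h
  have hpos := posDef_of_continuous_of_isUnit hVc hVherm
    (fun t => isUnit_of_lyapunov (hVherm t) hD (hV t)) (a := 0) (b := 1)
    (hV1 ▸ hD.smul (by norm_num))
  rwa [hV0] at hpos

end IsHurwitz

theorem le_of_mulVec_eq_smul_of_lyapunov {M D W : Matrix ι ι ℝ} {eps μ : ℝ} {v : ι → ℝ}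
    (hD : (D - eps • 1).PosSemidef) (hW : Mᵀ * W + W * M + D = 0) (hWherm : W.IsHermitian)
    (hv : v ≠ 0) (hWv : W *ᵥ v = μ • v) (hμ : 0 < μ) : eps / (2 * specNorm M) ≤ μ := by
  have hvv : 0 < v ⬝ᵥ v := by simpa using dotProduct_star_self_pos_iff.mpr hv
  have hDv : eps * (v ⬝ᵥ v) ≤ v ⬝ᵥ (D *ᵥ v) := by
    have := hD.dotProduct_mulVec_nonneg v
    rw [star_trivial, sub_mulVec, dotProduct_sub, smul_mulVec, one_mulVec, dotProduct_smul,
      smul_eq_mul] at this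
    linarith
  have hlyap : v ⬝ᵥ (D *ᵥ v) = -(2 * μ * (v ⬝ᵥ (M *ᵥ v))) := by
    rw [eq_neg_of_add_eq_zero_right hW, neg_mulVec, dotProduct_neg,
      hWherm.dotProduct_lyapunov_mulVec, hWv, smul_dotProduct, smul_eq_mul]
    ring
  have hMv := neg_le_of_abs_le (abs_dotProduct_mulVec_le_specNorm M v)
  have hbound : eps * (v ⬝ᵥ v) ≤ 2 * μ * specNorm M * (v ⬝ᵥ v) := by nlinarith
  exact div_le_of_le_mul₀ (mul_nonneg zero_le_two (norm_nonneg _)) hμ.le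
    (by linarith [le_of_mul_le_mul_right hbound hvv])

end

theorem stmt_16_general {n : ℕ} (M : Matrix (Fin n) (Fin n) ℝ) (hM : IsHurwitz M)
    (eps : ℝ) (heps : 0 < eps)
    (D : Matrix (Fin n) (Fin n) ℝ)
    (hD : (D - eps • (1 : Matrix (Fin n) (Fin n) ℝ)).PosSemidef)
    (W : Matrix (Fin n) (Fin n) ℝ) (hW : Mᵀ * W + W * M + D = 0) :
    (W - (eps / (2 * specNorm M)) • (1 : Matrix (Fin n) (Fin n) ℝ)).PosSemidef ∧
      lamMin W ≥ eps / (2 * specNorm M) := by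
  have hDpd : D.PosDef := by simpa using PosDef.posSemidef_add hD (PosDef.one.smul heps)
  have hWpd : W.PosDef := hM.posDef_of_lyapunov hDpd hW
  have hWherm := hWpd.isHermitian
  have hspec : ∀ μ ∈ spectrum ℝ W, eps / (2 * specNorm M) ≤ μ := by
    rw [hWherm.spectrum_real_eq_range_eigenvalues]
    rintro _ ⟨j, rfl⟩
    exact le_of_mulVec_eq_smul_of_lyapunov hD hW hWherm
      ((WithLp.ofLp_eq_zero 2).ne.2 <| hWherm.eigenvectorBasis.orthonormal.ne_zero j)
      (hWherm.mulVec_eigenvectorBasis j) (hWpd.eigenvalues_pos j)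
  refine ⟨hWherm.posSemidef_sub_smul_one hspec, ?_⟩
  rcases isEmpty_or_nonempty (Fin n) with hn | ⟨⟨j⟩⟩
  · simp [lamMin, specNorm, spectrum.of_subsingleton, Subsingleton.elim M 0]
  · exact le_csInf ⟨_, hWherm.eigenvalues_mem_spectrum_real j⟩ hspec

/-- lower bound on the Lyapunov solution when the constant term dominates εI. -/
theorem stmt_16 {n : ℕ} (M : Matrix (Fin n) (Fin n) ℝ) (hM : IsHurwitz M) (hM0 : M ≠ 0)
    (eps : ℝ) (heps : 0 < eps)
    (D : Matrix (Fin n) (Fin n) ℝ) (hDsymm : D.IsHermitian)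
    (hD : (D - eps • (1 : Matrix (Fin n) (Fin n) ℝ)).PosSemidef)
    (W : Matrix (Fin n) (Fin n) ℝ) (hW : Mᵀ * W + W * M + D = 0) :
    (W - (eps / (2 * specNorm M)) • (1 : Matrix (Fin n) (Fin n) ℝ)).PosSemidef ∧
      lamMin W ≥ eps / (2 * specNorm M) :=
  stmt_16_general M hM eps heps D hD W hW
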